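/- Let a > 0, b > 0, c > 0, and let p* > 0 be the unique positive root of N(p) = a·(1 + c·p)·ln(1 + c·p) − c·(a·p + b). Then the function f(p) = (a·p + b)/log₂(1 + c·p) is strictly decreasing on (0, p*] and strictly increasing on [p*, ∞); consequently f attains a strict global minimum on (0, ∞) at p*, i.e. f(p) > f(p*) for every p > 0 with p ≠ p*. -/

import Mathlib

open Real Set

/-!
With `g p = (a p + b) / ln (1 + c p)` we have `f = ln 2 · g` and
`g' p = N p / ((1 + c p) ln² (1 + c p))`, so on `p > 0` the derivative of `f` has the sign
of `N`. Since `N' p = a c ln (1 + c p) > 0` there, `N` is strictly increasing, hence negative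
before its root `p*` and positive after it.
-/

-- The paper's `N`.
noncomputable def powerCostNumerator (a b c p : ℝ) : ℝ :=
  a * (1 + c * p) * log (1 + c * p) - c * (a * p + b)

section

variable {a b c p : ℝ}

lemma hasDerivAt_powerCostNumerator (hp : 1 + c * p ≠ 0) :
    HasDerivAt (powerCostNumerator a b c) (a * c * log (1 + c * p)) p := by
  have hlin : HasDerivAt (fun q => 1 + c * q) c p := by
    simpa using ((hasDerivAt_id p).const_mul c).const_add 1
  have hcost : HasDerivAt (fun q => a * q + b) a p := by
    simpa using ((hasDerivAt_id p).const_mul a).add_const b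
  refine (((hlin.const_mul a).mul (hlin.log hp)).sub (hcost.const_mul c)).congr_deriv ?_
  field_simp
  ring

lemma hasDerivAt_div_log_one_add_mul (hp : 1 + c * p ≠ 0) (hlog : log (1 + c * p) ≠ 0) :
    HasDerivAt (fun q => (a * q + b) / log (1 + c * q))
      (powerCostNumerator a b c p / ((1 + c * p) * log (1 + c * p) ^ 2)) p := by
  have hlin : HasDerivAt (fun q => 1 + c * q) c p := by
    simpa using ((hasDerivAt_id p).const_mul c).const_add 1
  have hcost : HasDerivAt (fun q => a * q + b) a p := by
    simpa using ((hasDerivAt_id p).const_mul a).add_const b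
  refine (hcost.div (hlin.log hp) hlog).congr_deriv ?_
  rw [powerCostNumerator]
  field_simp

lemma one_lt_one_add_mul (hc : 0 < c) (hp : 0 < p) : 1 < 1 + c * p :=
  lt_add_of_pos_right 1 (mul_pos hc hp)

lemma strictMonoOn_powerCostNumerator (ha : 0 < a) (hc : 0 < c) :
    StrictMonoOn (powerCostNumerator a b c) (Ioi 0) := by
  have hderiv (p : ℝ) (hp : p ∈ Ioi 0) := hasDerivAt_powerCostNumerator (a := a) (b := b)
    (one_pos.trans (one_lt_one_add_mul hc hp)).ne'
  refine strictMonoOn_of_deriv_pos (convex_Ioi 0)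
    (continuousOn_of_forall_continuousAt fun p hp => (hderiv p hp).continuousAt) fun p hp => ?_
  rw [interior_Ioi] at hp
  rw [(hderiv p hp).deriv]
  exact mul_pos (mul_pos ha hc) (log_pos (one_lt_one_add_mul hc hp))

lemma hasDerivAt_div_log_one_add_mul_of_pos (hc : 0 < c) (hp : 0 < p) :
    HasDerivAt (fun q => (a * q + b) / log (1 + c * q))
      (powerCostNumerator a b c p / ((1 + c * p) * log (1 + c * p) ^ 2)) p ∧
      0 < (1 + c * p) * log (1 + c * p) ^ 2 := by
  have h := one_lt_one_add_mul hc hp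
  exact ⟨hasDerivAt_div_log_one_add_mul (one_pos.trans h).ne' (log_pos h).ne',
    mul_pos (one_pos.trans h) (pow_pos (log_pos h) 2)⟩

variable {pstar : ℝ} (ha : 0 < a) (hc : 0 < c) (hroot : powerCostNumerator a b c pstar = 0)
include ha hc hroot

lemma strictAntiOn_div_log_one_add_mul :
    StrictAntiOn (fun p => (a * p + b) / log (1 + c * p)) (Ioc 0 pstar) := by
  refine strictAntiOn_of_deriv_neg (convex_Ioc 0 pstar)
    (continuousOn_of_forall_continuousAt fun p hp =>
      (hasDerivAt_div_log_one_add_mul_of_pos hc hp.1).1.continuousAt) fun p hp => ?_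
  rw [interior_Ioc] at hp
  obtain ⟨hderiv, hden⟩ := hasDerivAt_div_log_one_add_mul_of_pos (a := a) (b := b) hc hp.1
  rw [hderiv.deriv]
  refine div_neg_of_neg_of_pos ?_ hden
  rw [← hroot]
  exact strictMonoOn_powerCostNumerator ha hc hp.1 (hp.1.trans hp.2) hp.2

lemma strictMonoOn_div_log_one_add_mul (hpstar : 0 < pstar) :
    StrictMonoOn (fun p => (a * p + b) / log (1 + c * p)) (Ici pstar) := by
  refine strictMonoOn_of_deriv_pos (convex_Ici pstar)
    (continuousOn_of_forall_continuousAt fun p hp =>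
      (hasDerivAt_div_log_one_add_mul_of_pos hc (hpstar.trans_le hp)).1.continuousAt) fun p hp => ?_
  rw [interior_Ici] at hp
  obtain ⟨hderiv, hden⟩ :=
    hasDerivAt_div_log_one_add_mul_of_pos (a := a) (b := b) hc (hpstar.trans hp)
  rw [hderiv.deriv]
  refine div_pos ?_ hden
  rw [← hroot]
  exact strictMonoOn_powerCostNumerator ha hc hpstar (hpstar.trans hp) hp

end

theorem stmt_3_general (a b c : ℝ) (ha : 0 < a) (hc : 0 < c)
    (pstar : ℝ) (hpstar : 0 < pstar)
    (hroot : a * (1 + c * pstar) * Real.log (1 + c * pstar)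
        - c * (a * pstar + b) = 0) :
    StrictAntiOn (fun p : ℝ => (a * p + b) / Real.logb 2 (1 + c * p))
        (Set.Ioc 0 pstar) ∧
    StrictMonoOn (fun p : ℝ => (a * p + b) / Real.logb 2 (1 + c * p))
        (Set.Ici pstar) ∧
    ∀ p : ℝ, 0 < p → p ≠ pstar →
      (a * pstar + b) / Real.logb 2 (1 + c * pstar) <
        (a * p + b) / Real.logb 2 (1 + c * p) := by
  have hf : (fun p : ℝ => (a * p + b) / logb 2 (1 + c * p)) =
      fun p => log 2 * ((a * p + b) / log (1 + c * p)) := by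
    funext p
    rw [logb, div_div_eq_mul_div, mul_comm, mul_div_assoc]
  have hscale := strictMono_mul_left_of_pos (log_pos one_lt_two)
  have hanti : StrictAntiOn (fun p : ℝ => (a * p + b) / logb 2 (1 + c * p)) (Ioc 0 pstar) := by
    rw [hf]
    exact hscale.comp_strictAntiOn (strictAntiOn_div_log_one_add_mul ha hc hroot)
  have hmono : StrictMonoOn (fun p : ℝ => (a * p + b) / logb 2 (1 + c * p)) (Ici pstar) := by
    rw [hf]
    exact hscale.comp_strictMonoOn (strictMonoOn_div_log_one_add_mul ha hc hroot hpstar)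
  refine ⟨hanti, hmono, fun p hp hne => ?_⟩
  rcases hne.lt_or_gt with h | h
  · exact hanti ⟨hp, h.le⟩ ⟨hpstar, le_rfl⟩ h
  · exact hmono self_mem_Ici h.le h

/-- if `p* > 0` is the positive root of
`N(p) = a·(1 + c·p)·ln(1 + c·p) − c·(a·p + b)`, then
`f(p) = (a·p + b)/log₂(1 + c·p)` is strictly decreasing on `(0, p*]`, strictly
increasing on `[p*, ∞)`, and attains a strict global minimum on `(0, ∞)` at `p*`. -/
theorem stmt_3 (a b c : ℝ) (ha : 0 < a) (hb : 0 < b) (hc : 0 < c)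
    (pstar : ℝ) (hpstar : 0 < pstar)
    (hroot : a * (1 + c * pstar) * Real.log (1 + c * pstar)
        - c * (a * pstar + b) = 0) :
    StrictAntiOn (fun p : ℝ => (a * p + b) / Real.logb 2 (1 + c * p))
        (Set.Ioc 0 pstar) ∧
    StrictMonoOn (fun p : ℝ => (a * p + b) / Real.logb 2 (1 + c * p))
        (Set.Ici pstar) ∧
    ∀ p : ℝ, 0 < p → p ≠ pstar →
      (a * pstar + b) / Real.logb 2 (1 + c * pstar) <
        (a * p + b) / Real.logb 2 (1 + c * p) :=
  stmt_3_general a b c ha hc pstar hpstar hroot
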